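/- arXiv:1910.14384 — 5 statements merged into one kernel-verified Lean document; each statement's English description precedes it below -/
import Mathlib

section
/- Subsumption of pomsets with boxes is antisymmetric up to isomorphism: if there are homomorphisms φ : P → Q and ψ : Q → P between finite posets with boxes, then P and Q are isomorphic. -/
/-- A poset with boxes over an alphabet `A`. -/
structure PB (A : Type) : Type 1 where
  Ev : Type
  le : Ev → Ev → Prop
  le_refl : ∀ e, le e e
  le_trans : ∀ e f g, le e f → le f g → le e g
  le_antisymm : ∀ e f, le e f → le f e → e = f
  lab : Ev → A
  boxes : Set (Set Ev)
  boxes_ne : ∀ B ∈ boxes, B.Nonempty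

/-- A homomorphism of posets with boxes: a bijection preserving labels,
order and boxes. -/
structure Hom {A : Type} (P Q : PB A) where
  toFun : P.Ev → Q.Ev
  bij : Function.Bijective toFun
  lab_eq : ∀ e, Q.lab (toFun e) = P.lab e
  mono : ∀ e f, P.le e f → Q.le (toFun e) (toFun f)
  box_pres : ∀ B ∈ P.boxes, toFun '' B ∈ Q.boxes

/-- Order-reflecting homomorphism. -/
def Hom.OrdRefl {A : Type} {P Q : PB A} (φ : Hom P Q) : Prop :=
  ∀ e f, Q.le (φ.toFun e) (φ.toFun f) → P.le e f

/-- Box-reflecting homomorphism. -/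
def Hom.BoxRefl {A : Type} {P Q : PB A} (φ : Hom P Q) : Prop :=
  ∀ B : Set P.Ev, φ.toFun '' B ∈ Q.boxes → B ∈ P.boxes

/-- Isomorphism of posets with boxes. -/
def Iso {A : Type} (P Q : PB A) : Prop :=
  ∃ φ : Hom P Q, φ.OrdRefl ∧ φ.BoxRefl

/-- `Subsume P Q` means `P ⊑ Q` : there is a homomorphism from `Q` to `P`. -/
def Subsume {A : Type} (P Q : PB A) : Prop := Nonempty (Hom Q P)

/-- The empty poset with boxes. -/
def onePB (A : Type) : PB A where
  Ev := PEmpty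
  le := fun _ _ => True
  le_refl := fun e => trivial
  le_trans := fun _ _ _ _ _ => trivial
  le_antisymm := fun e => e.elim
  lab := fun e => e.elim
  boxes := ∅
  boxes_ne := fun _ h => absurd h (Set.notMem_empty _)

/-- The atomic poset with boxes, with a single event labelled `a`. -/
def atomPB {A : Type} (a : A) : PB A where
  Ev := PUnit
  le := fun _ _ => True
  le_refl := fun _ => trivial
  le_trans := fun _ _ _ _ _ => trivial
  le_antisymm := fun _ _ _ _ => rfl
  lab := fun _ => a
  boxes := ∅
  boxes_ne := fun _ h => absurd h (Set.notMem_empty _)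

/-- The order of a sequential composition on the disjoint union of events. -/
def seqLE {A : Type} (P Q : PB A) : P.Ev ⊕ Q.Ev → P.Ev ⊕ Q.Ev → Prop
  | .inl a, .inl b => P.le a b
  | .inr a, .inr b => Q.le a b
  | .inl _, .inr _ => True
  | .inr _, .inl _ => False

/-- Sequential composition of posets with boxes. -/
def seqPB {A : Type} (P Q : PB A) : PB A where
  Ev := P.Ev ⊕ Q.Ev
  le := seqLE P Q
  le_refl := fun e => by cases e <;> simp [seqLE, PB.le_refl]
  le_trans := fun e f g hef hfg => by
    cases e <;> cases f <;> cases g <;>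
      simp_all [seqLE] <;>
      first
        | exact P.le_trans _ _ _ hef hfg
        | exact Q.le_trans _ _ _ hef hfg
  le_antisymm := fun e f hef hfe => by
    cases e <;> cases f <;> simp_all [seqLE]
    · exact P.le_antisymm _ _ hef hfe
    · exact Q.le_antisymm _ _ hef hfe
  lab := Sum.elim P.lab Q.lab
  boxes := (Set.image Sum.inl '' P.boxes) ∪ (Set.image Sum.inr '' Q.boxes)
  boxes_ne := by
    rintro B (⟨C, hC, rfl⟩ | ⟨C, hC, rfl⟩)
    · exact ((P.boxes_ne C hC).image _)
    · exact ((Q.boxes_ne C hC).image _)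

/-- The order of a parallel composition on the disjoint union of events. -/
def parLE {A : Type} (P Q : PB A) : P.Ev ⊕ Q.Ev → P.Ev ⊕ Q.Ev → Prop
  | .inl a, .inl b => P.le a b
  | .inr a, .inr b => Q.le a b
  | .inl _, .inr _ => False
  | .inr _, .inl _ => False

/-- Parallel composition of posets with boxes. -/
def parPB {A : Type} (P Q : PB A) : PB A where
  Ev := P.Ev ⊕ Q.Ev
  le := parLE P Q
  le_refl := fun e => by cases e <;> simp [parLE, PB.le_refl]
  le_trans := fun e f g hef hfg => by
    cases e <;> cases f <;> cases g <;>
      simp_all [parLE] <;>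
      first
        | exact P.le_trans _ _ _ hef hfg
        | exact Q.le_trans _ _ _ hef hfg
  le_antisymm := fun e f hef hfe => by
    cases e <;> cases f <;> simp_all [parLE]
    · exact P.le_antisymm _ _ hef hfe
    · exact Q.le_antisymm _ _ hef hfe
  lab := Sum.elim P.lab Q.lab
  boxes := (Set.image Sum.inl '' P.boxes) ∪ (Set.image Sum.inr '' Q.boxes)
  boxes_ne := by
    rintro B (⟨C, hC, rfl⟩ | ⟨C, hC, rfl⟩)
    · exact ((P.boxes_ne C hC).image _)
    · exact ((Q.boxes_ne C hC).image _)

/-- Boxing: add the full (nonempty) set of events as a box. -/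
def boxPB {A : Type} (P : PB A) : PB A where
  Ev := P.Ev
  le := P.le
  le_refl := P.le_refl
  le_trans := P.le_trans
  le_antisymm := P.le_antisymm
  lab := P.lab
  boxes := P.boxes ∪ {B | B = Set.univ ∧ B.Nonempty}
  boxes_ne := by
    rintro B (hB | ⟨rfl, hne⟩)
    · exact P.boxes_ne B hB
    · exact hne

/-- Restriction of a poset with boxes to a subset of its events. -/
def restrictPB {A : Type} (P : PB A) (S : Set P.Ev) : PB A where
  Ev := S
  le := fun x y => P.le x.1 y.1
  le_refl := fun x => P.le_refl x.1
  le_trans := fun x y z => P.le_trans x.1 y.1 z.1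
  le_antisymm := fun x y h h' => Subtype.ext (P.le_antisymm _ _ h h')
  lab := fun x => P.lab x.1
  boxes := {B | Subtype.val '' B ∈ P.boxes}
  boxes_ne := fun B hB => by
    rcases P.boxes_ne _ hB with ⟨x, ⟨y, hy, rfl⟩⟩
    exact ⟨y, hy⟩

/-- Forbidden pattern P1 (the `N` pattern). -/
def hasP1 {A : Type} (P : PB A) : Prop :=
  ∃ e1 e2 e3 e4 : P.Ev,
    P.le e1 e3 ∧ P.le e2 e3 ∧ P.le e2 e4 ∧
    ¬ P.le e1 e4 ∧ ¬ P.le e2 e1 ∧ ¬ P.le e4 e3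

/-- Forbidden pattern P2 (overlapping non-nested boxes). -/
def hasP2 {A : Type} (P : PB A) : Prop :=
  ∃ (Bx Cx : Set P.Ev) (e1 e2 e3 : P.Ev),
    Bx ∈ P.boxes ∧ Cx ∈ P.boxes ∧
    e1 ∈ Bx \ Cx ∧ e2 ∈ Bx ∩ Cx ∧ e3 ∈ Cx \ Bx

/-- Forbidden pattern P3. -/
def hasP3 {A : Type} (P : PB A) : Prop :=
  ∃ (Bx : Set P.Ev) (e1 e2 e3 : P.Ev),
    Bx ∈ P.boxes ∧ e1 ∉ Bx ∧ e2 ∈ Bx ∧ e3 ∈ Bx ∧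
    P.le e1 e2 ∧ ¬ P.le e1 e3

/-- Forbidden pattern P4. -/
def hasP4 {A : Type} (P : PB A) : Prop :=
  ∃ (Bx : Set P.Ev) (e1 e2 e3 : P.Ev),
    Bx ∈ P.boxes ∧ e1 ∉ Bx ∧ e2 ∈ Bx ∧ e3 ∈ Bx ∧
    P.le e2 e1 ∧ ¬ P.le e3 e1

/-- A set of events is non-trivial if it is neither empty nor everything. -/
def NonTrivial {A : Type} (P : PB A) (S : Set P.Ev) : Prop :=
  S ≠ ∅ ∧ S ≠ Set.univ

/-- A set of events is nested if every box is contained in it or disjoint from it. -/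
def Nested {A : Type} (P : PB A) (S : Set P.Ev) : Prop :=
  ∀ B ∈ P.boxes, B ⊆ S ∨ B ∩ S = ∅

/-- A set of events is prefix if every event in it is below every event outside. -/
def IsPrefix {A : Type} (P : PB A) (S : Set P.Ev) : Prop :=
  ∀ e ∈ S, ∀ f ∉ S, P.le e f

/-- A set of events is isolated if its events are incomparable with outside events. -/
def Isolated {A : Type} (P : PB A) (S : Set P.Ev) : Prop :=
  ∀ e ∈ S, ∀ f ∉ S, ¬ P.le e f ∧ ¬ P.le f e

/-! Counting: `φ × φ` maps the finite relation `≤_P` injectively into `≤_Q`, and `ψ × ψ` maps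
`≤_Q` injectively back into `≤_P`, so both relations have the same size and `φ × φ` is onto
`≤_Q`; by injectivity of `φ` this is order reflection. The same count with `B ↦ φ '' B` on
the finite set of boxes of `P` gives box reflection. -/

namespace Set

variable {α β : Type*} {f : α → β} {g : β → α} {s : Set α} {t : Set β}

theorem image_eq_of_mapsTo_of_mapsTo (hs : s.Finite) (hf : InjOn f s) (hg : InjOn g t)
    (hst : MapsTo f s t) (hts : MapsTo g t s) : f '' s = t := by
  have ht : t.Finite := Finite.of_finite_image (hs.subset hts.image_subset) hg
  refine eq_of_subset_of_ncard_le hst.image_subset ?_ ht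
  calc t.ncard = (g '' t).ncard := hg.ncard_image.symm
    _ ≤ s.ncard := ncard_le_ncard hts.image_subset hs
    _ = (f '' s).ncard := hf.ncard_image.symm

theorem mem_of_apply_mem_of_mapsTo (hs : s.Finite) (hf : Function.Injective f)
    (hg : InjOn g t) (hst : MapsTo f s t) (hts : MapsTo g t s) {x : α} (hx : f x ∈ t) :
    x ∈ s := by
  rwa [← image_eq_of_mapsTo_of_mapsTo hs hf.injOn hg hst hts, hf.mem_set_image] at hx

end Set

namespace Hom

variable {A : Type} {P Q : PB A}

theorem ordRefl_of_hom [Finite P.Ev] (φ : Hom P Q) (ψ : Hom Q P) : φ.OrdRefl :=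
  fun e f hle => Set.mem_of_apply_mem_of_mapsTo (s := {p : P.Ev × P.Ev | P.le p.1 p.2})
    (t := {q : Q.Ev × Q.Ev | Q.le q.1 q.2}) (Set.toFinite _)
    (φ.bij.1.prodMap φ.bij.1) (ψ.bij.1.prodMap ψ.bij.1).injOn
    (fun p hp => φ.mono _ _ hp) (fun q hq => ψ.mono _ _ hq) (x := (e, f)) hle

theorem boxRefl_of_hom [Finite P.Ev] (φ : Hom P Q) (ψ : Hom Q P) : φ.BoxRefl :=
  fun _ hB => Set.mem_of_apply_mem_of_mapsTo (Set.toFinite P.boxes)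
    (Set.image_injective.2 φ.bij.1) (Set.image_injective.2 ψ.bij.1).injOn
    φ.box_pres ψ.box_pres hB

end Hom

theorem subsumption_antisymm_general (A : Type) (P Q : PB A)
    (hP : Finite P.Ev)
    (h1 : Nonempty (Hom P Q)) (h2 : Nonempty (Hom Q P)) :
    Iso P Q := by
  obtain ⟨φ⟩ := h1
  obtain ⟨ψ⟩ := h2
  exact ⟨φ, φ.ordRefl_of_hom ψ, φ.boxRefl_of_hom ψ⟩

/-- Subsumption is antisymmetric up to isomorphism for finite posets with boxes. -/
theorem subsumption_antisymm (A : Type) (P Q : PB A)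
    (hP : Finite P.Ev) (hQ : Finite Q.Ev)
    (h1 : Nonempty (Hom P Q)) (h2 : Nonempty (Hom Q P)) :
    Iso P Q :=
  subsumption_antisymm_general A P Q hP h1 h2
end

section
/- There exist infinite posets P and Q with homomorphisms in both directions that are not isomorphic; concretely, with all events labelled a and no boxes, P = ℕ×{0,1,2} with (n,i) ≤ (m,j) iff n ≤ m and i = j < 2, and Q = ℕ×{0,1} with (n,i) ≤ (m,j) iff n ≤ m and i = j = 0, admit order-preserving label-preserving bijections in both directions but no order-reflecting bijection. -/
/-- The infinite poset `ℕ × {0,1,2}` with `(n,i) ≤ (m,j)` iff `n ≤ m` and `i = j < 2`,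
all events labelled by the unique letter, no boxes. -/
def Pex : PB Unit where
  Ev := ℕ × Fin 3
  le := fun x y => x = y ∨ (x.1 ≤ y.1 ∧ x.2 = y.2 ∧ x.2.val < 2)
  le_refl := fun _ => Or.inl rfl
  le_trans := by
    rintro e f g (rfl | ⟨h1, h2, h3⟩) hfg
    · exact hfg
    · rcases hfg with rfl | ⟨k1, k2, k3⟩
      · exact Or.inr ⟨h1, h2, h3⟩
      · exact Or.inr ⟨le_trans h1 k1, h2.trans k2, h3⟩
  le_antisymm := by
    rintro e f (rfl | ⟨h1, h2, h3⟩) hfe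
    · rfl
    · rcases hfe with rfl | ⟨k1, k2, _⟩
      · rfl
      · exact Prod.ext (le_antisymm h1 k1) h2
  lab := fun _ => ()
  boxes := ∅
  boxes_ne := fun _ h => absurd h (Set.notMem_empty _)

/-- The infinite poset `ℕ × {0,1}` with `(n,i) ≤ (m,j)` iff `n ≤ m` and `i = j = 0`,
all events labelled by the unique letter, no boxes. -/
def Qex : PB Unit where
  Ev := ℕ × Fin 2
  le := fun x y => x = y ∨ (x.1 ≤ y.1 ∧ x.2 = y.2 ∧ x.2.val = 0)
  le_refl := fun _ => Or.inl rfl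
  le_trans := by
    rintro e f g (rfl | ⟨h1, h2, h3⟩) hfg
    · exact hfg
    · rcases hfg with rfl | ⟨k1, k2, k3⟩
      · exact Or.inr ⟨h1, h2, h3⟩
      · exact Or.inr ⟨le_trans h1 k1, h2.trans k2, h3⟩
  le_antisymm := by
    rintro e f (rfl | ⟨h1, h2, h3⟩) hfe
    · rfl
    · rcases hfe with rfl | ⟨k1, k2, _⟩
      · rfl
      · exact Prod.ext (le_antisymm h1 k1) h2
  lab := fun _ => ()
  boxes := ∅
  boxes_ne := fun _ h => absurd h (Set.notMem_empty _)

/-!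
The two chains of `Pex` can be interleaved into the single chain of `Qex`, and conversely the
antichain of `Qex` can be split into a chain and an antichain of `Pex`; this gives order-preserving
bijections both ways. None of them reflects the order: an injective monotone map sends
non-maximal events to non-maximal ones, the non-maximal events of `Qex` form a chain, while `Pex`
has two incomparable ones.
-/

namespace PB

variable {A : Type}

def lt (P : PB A) (e f : P.Ev) : Prop := P.le e f ∧ e ≠ f

end PB

namespace Hom

variable {A : Type} {P Q : PB A}

theorem map_lt (φ : Hom P Q) {e f : P.Ev} (h : P.lt e f) : Q.lt (φ.toFun e) (φ.toFun f) :=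
  ⟨φ.mono e f h.1, φ.bij.injective.ne h.2⟩

def ofEquiv [Subsingleton A] (hP : P.boxes = ∅) (f : P.Ev ≃ Q.Ev)
    (hf : ∀ e e', P.le e e' → Q.le (f e) (f e')) : Hom P Q where
  toFun := f
  bij := f.bijective
  lab_eq _ := Subsingleton.elim _ _
  mono := hf
  box_pres B hB := absurd (hP ▸ hB) (Set.notMem_empty B)

end Hom

theorem not_iso_of_nonmaximal_comparable {A : Type} {P Q : PB A}
    (hQ : ∀ x x' y y' : Q.Ev, Q.lt x x' → Q.lt y y' → Q.le x y ∨ Q.le y x)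
    {e e' f f' : P.Ev} (he : P.lt e e') (hf : P.lt f f') (hef : ¬ P.le e f) (hfe : ¬ P.le f e) :
    ¬ Iso P Q := by
  rintro ⟨φ, hrefl, -⟩
  rcases hQ _ _ _ _ (φ.map_lt he) (φ.map_lt hf) with h | h
  exacts [hef (hrefl e f h), hfe (hrefl f e h)]

def mergeChains : ℕ × Fin 3 ≃ ℕ × Fin 2 where
  toFun p := if p.2 = 2 then (p.1, 1) else (2 * p.1 + p.2, 0)
  invFun q := if q.2 = 1 then (q.1, 2) else (q.1 / 2, ⟨q.1 % 2, by omega⟩)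
  left_inv := by
    rintro ⟨n, i⟩
    fin_cases i <;> simp; omega
  right_inv := by
    rintro ⟨m, j⟩
    fin_cases j
    · have : m % 2 ≠ 2 := by omega
      simp [Fin.ext_iff, this, Nat.div_add_mod]
    · rfl

def splitAntichain : ℕ × Fin 2 ≃ ℕ × Fin 3 where
  toFun q := if q.2 = 0 then (q.1, 0) else (q.1 / 2, ⟨q.1 % 2 + 1, by omega⟩)
  invFun p := if p.2 = 0 then (p.1, 0) else (2 * p.1 + (p.2 - 1 : ℕ), 1)
  left_inv := by
    rintro ⟨m, j⟩
    fin_cases j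
    · rfl
    · simp [Fin.ext_iff, Nat.div_add_mod]
  right_inv := by
    rintro ⟨n, i⟩
    fin_cases i <;> simp [Fin.ext_iff]; omega

theorem mergeChains_mono (e f : Pex.Ev) (h : Pex.le e f) :
    Qex.le (mergeChains e) (mergeChains f) := by
  obtain ⟨n, i⟩ := e
  obtain ⟨m, j⟩ := f
  rcases h with h | ⟨hnm, hij, hi⟩
  · exact Or.inl (congrArg mergeChains h)
  · obtain rfl : i = j := hij
    have : i ≠ 2 := by simp only at hi; simp [Fin.ext_iff]; omega
    right
    simpa [mergeChains, this] using hnm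

theorem splitAntichain_mono (e f : Qex.Ev) (h : Qex.le e f) :
    Pex.le (splitAntichain e) (splitAntichain f) := by
  obtain ⟨n, i⟩ := e
  obtain ⟨m, j⟩ := f
  rcases h with h | ⟨hnm, hij, hi⟩
  · exact Or.inl (congrArg splitAntichain h)
  · obtain rfl : i = j := hij
    obtain rfl : i = 0 := Fin.ext hi
    right
    simpa [splitAntichain] using hnm

namespace Pex

theorem lt_succ (n : ℕ) {i : Fin 3} (hi : i.val < 2) : Pex.lt (n, i) (n + 1, i) :=
  ⟨Or.inr ⟨n.le_succ, rfl, hi⟩, fun h => n.succ_ne_self (congrArg Prod.fst h).symm⟩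

theorem not_le_of_snd_ne {e f : Pex.Ev} (h : e.2 ≠ f.2) : ¬ Pex.le e f := by
  rintro (rfl | ⟨-, h', -⟩)
  exacts [h rfl, h h']

end Pex

namespace Qex

theorem snd_eq_zero_of_lt {x y : Qex.Ev} (h : Qex.lt x y) : x.2 = 0 := by
  obtain ⟨h | ⟨-, -, hx⟩, hne⟩ := h
  · exact absurd h hne
  · exact Fin.ext hx

theorem le_total_of_lt (x x' y y' : Qex.Ev) (hx : Qex.lt x x') (hy : Qex.lt y y') :
    Qex.le x y ∨ Qex.le y x := by
  have hx0 := snd_eq_zero_of_lt hx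
  have hy0 := snd_eq_zero_of_lt hy
  rcases le_total x.1 y.1 with h | h
  exacts [Or.inl (Or.inr ⟨h, hx0.trans hy0.symm, congrArg Fin.val hx0⟩),
    Or.inr (Or.inr ⟨h, hy0.trans hx0.symm, congrArg Fin.val hy0⟩)]

end Qex

/-- There exist infinite posets with homomorphisms in both directions that are
not isomorphic: `Pex` and `Qex` admit order- and label-preserving bijections in
both directions, but are not isomorphic (no order-reflecting bijection). -/
theorem mutual_homomorphic_not_isomorphic :
    Nonempty (Hom Pex Qex) ∧ Nonempty (Hom Qex Pex) ∧ ¬ Iso Pex Qex := by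
  refine ⟨⟨Hom.ofEquiv rfl mergeChains mergeChains_mono⟩,
    ⟨Hom.ofEquiv rfl splitAntichain splitAntichain_mono⟩, ?_⟩
  exact not_iso_of_nonmaximal_comparable Qex.le_total_of_lt
    (Pex.lt_succ 0 (i := 0) (by decide)) (Pex.lt_succ 0 (i := 1) (by decide))
    (Pex.not_le_of_snd_ne (by decide)) (Pex.not_le_of_snd_ne (by decide))
end

section
/- Every series–parallel pomset with boxes (i.e., the interpretation of any term built from 1, atoms, sequential composition, parallel composition, and boxing) avoids all four forbidden patterns P1 (the 'N' pattern), P2 (overlapping non-nested boxes), P3, and P4 (an external event distinguishing events inside a box by the order). -/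
/-- Series–parallel terms. -/
inductive Term (A : Type) : Type
  | one : Term A
  | atom (a : A) : Term A
  | seq (s t : Term A) : Term A
  | par (s t : Term A) : Term A
  | box (s : Term A) : Term A

/-- Interpretation of terms as posets with boxes. -/
def semT {A : Type} : Term A → PB A
  | .one => onePB A
  | .atom a => atomPB a
  | .seq s t => seqPB (semT s) (semT t)
  | .par s t => parPB (semT s) (semT t)
  | .box s => boxPB (semT s)

/-- Derivability in the equational theory of bimonoids with boxes. -/
inductive BimEq {A : Type} : Term A → Term A → Prop
  | seq_assoc (s t u : Term A) : BimEq (.seq s (.seq t u)) (.seq (.seq s t) u)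
  | par_assoc (s t u : Term A) : BimEq (.par s (.par t u)) (.par (.par s t) u)
  | par_comm (s t : Term A) : BimEq (.par s t) (.par t s)
  | seq_unit_l (s : Term A) : BimEq (.seq .one s) s
  | seq_unit_r (s : Term A) : BimEq (.seq s .one) s
  | par_unit (s : Term A) : BimEq (.par .one s) s
  | box_box (s : Term A) : BimEq (.box (.box s)) (.box s)
  | box_one : BimEq (.box .one) .one
  | refl (s : Term A) : BimEq s s
  | symm {s t : Term A} : BimEq s t → BimEq t s
  | trans {s t u : Term A} : BimEq s t → BimEq t u → BimEq s u
  | seq_congr {s s' t t' : Term A} : BimEq s s' → BimEq t t' → BimEq (.seq s t) (.seq s' t')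
  | par_congr {s s' t t' : Term A} : BimEq s s' → BimEq t t' → BimEq (.par s t) (.par s' t')
  | box_congr {s s' : Term A} : BimEq s s' → BimEq (.box s) (.box s')

/-- Derivability in the inequational theory of concurrent monoids with boxes:
bimonoid axioms (in both directions) together with exchange and box elimination. -/
inductive CMLe {A : Type} : Term A → Term A → Prop
  | of_eq {s t : Term A} : BimEq s t → CMLe s t
  | exchange (s t u v : Term A) :
      CMLe (.seq (.par s t) (.par u v)) (.par (.seq s u) (.seq t v))
  | box_le (s : Term A) : CMLe (.box s) s
  | refl (s : Term A) : CMLe s s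
  | trans {s t u : Term A} : CMLe s t → CMLe t u → CMLe s u
  | seq_congr {s s' t t' : Term A} : CMLe s s' → CMLe t t' → CMLe (.seq s t) (.seq s' t')
  | par_congr {s s' t t' : Term A} : CMLe s s' → CMLe t t' → CMLe (.par s t) (.par s' t')
  | box_congr {s s' : Term A} : CMLe s s' → CMLe (.box s) (.box s')

/-!
Induction on the term, one pattern at a time. In `s·t` and `s∥t` every box lies inside one
summand, and whether an event of one summand is below an event of the other depends only on the
summands (always for `s·t` from left to right, never otherwise); going through the possible
distributions of a pattern's events over the summands shows that it must lie in a single one.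
For P2 it is cleaner to argue positively: avoiding P2 means that the boxes form a laminar family,
and laminar families survive disjoint unions and adding the whole set. The box added by `[s]`
contains every event, so it cannot be the box of P3 or P4, whose first event lies outside it.
-/

def Laminar {α : Type*} (𝓑 : Set (Set α)) : Prop :=
  ∀ B ∈ 𝓑, ∀ C ∈ 𝓑, B ⊆ C ∨ C ⊆ B ∨ Disjoint B C

namespace Laminar

variable {α β : Type*} {𝓑 𝓒 : Set (Set α)}

theorem empty : Laminar (∅ : Set (Set α)) := fun _ h => h.elim

theorem mono (h : Laminar 𝓑) (h𝓒 : 𝓒 ⊆ 𝓑) : Laminar 𝓒 :=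
  fun B hB C hC => h B (h𝓒 hB) C (h𝓒 hC)

theorem insert_univ (h : Laminar 𝓑) : Laminar (insert Set.univ 𝓑) := by
  rintro B (rfl | hB) C (rfl | hC)
  · exact Or.inl le_rfl
  · exact Or.inr (Or.inl (Set.subset_univ C))
  · exact Or.inl (Set.subset_univ B)
  · exact h B hB C hC

theorem sum {𝓓 : Set (Set β)} (h𝓑 : Laminar 𝓑) (h𝓓 : Laminar 𝓓) :
    Laminar (Set.image Sum.inl '' 𝓑 ∪ Set.image Sum.inr '' 𝓓) := by
  have hdisj : ∀ (B : Set α) (D : Set β), Disjoint (Sum.inl '' B) (Sum.inr '' D) :=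
    fun B D => Set.isCompl_range_inl_range_inr.disjoint.mono
      (Set.image_subset_range _ _) (Set.image_subset_range _ _)
  rintro _ (⟨B, hB, rfl⟩ | ⟨B, hB, rfl⟩) _ (⟨C, hC, rfl⟩ | ⟨C, hC, rfl⟩)
  · rcases h𝓑 B hB C hC with h | h | h
    · exact Or.inl (Set.image_mono h)
    · exact Or.inr (Or.inl (Set.image_mono h))
    · exact Or.inr (Or.inr (Set.disjoint_image_of_injective Sum.inl_injective h))
  · exact Or.inr (Or.inr (hdisj B C))
  · exact Or.inr (Or.inr (hdisj C B).symm)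
  · rcases h𝓓 B hB C hC with h | h | h
    · exact Or.inl (Set.image_mono h)
    · exact Or.inr (Or.inl (Set.image_mono h))
    · exact Or.inr (Or.inr (Set.disjoint_image_of_injective Sum.inr_injective h))

end Laminar

section Patterns

variable {A : Type} {P Q : PB A}

theorem not_hasP2_iff_laminar : ¬ hasP2 P ↔ Laminar P.boxes := by
  constructor
  · intro h B hB C hC
    by_contra! hBC
    obtain ⟨e1, he1B, he1C⟩ := Set.not_subset.mp hBC.1
    obtain ⟨e3, he3C, he3B⟩ := Set.not_subset.mp hBC.2.1
    obtain ⟨e2, he2⟩ := Set.not_disjoint_iff_nonempty_inter.mp hBC.2.2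
    exact h ⟨B, C, e1, e2, e3, hB, hC, ⟨he1B, he1C⟩, he2, ⟨he3C, he3B⟩⟩
  · rintro h ⟨B, C, e1, e2, e3, hB, hC, h1, h2, h3⟩
    rcases h B hB C hC with hBC | hCB | hBC
    · exact h1.2 (hBC h1.1)
    · exact h3.2 (hCB h3.1)
    · exact Set.disjoint_left.mp hBC h2.1 h2.2

instance : Subsingleton (onePB A).Ev := inferInstanceAs (Subsingleton PEmpty)

instance (a : A) : Subsingleton (atomPB a).Ev := inferInstanceAs (Subsingleton PUnit)

theorem not_hasP1_of_subsingleton [Subsingleton P.Ev] : ¬ hasP1 P := by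
  rintro ⟨e1, -, -, e4, -, -, -, h14, -⟩
  exact h14 (Subsingleton.elim e1 e4 ▸ P.le_refl e1)

theorem not_hasP1_seq (hP : ¬ hasP1 P) (hQ : ¬ hasP1 Q) : ¬ hasP1 (seqPB P Q) := by
  rintro ⟨e1, e2, e3, e4, h13, h23, h24, h14, h21, h43⟩
  cases e1 <;> cases e2 <;> cases e3 <;> cases e4 <;>
    simp_all only [seqPB, seqLE, not_true_eq_false, not_false_eq_true] <;>
    first
      | exact hP ⟨_, _, _, _, h13, h23, h24, h14, h21, h43⟩
      | exact hQ ⟨_, _, _, _, h13, h23, h24, h14, h21, h43⟩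

theorem not_hasP1_par (hP : ¬ hasP1 P) (hQ : ¬ hasP1 Q) : ¬ hasP1 (parPB P Q) := by
  rintro ⟨e1, e2, e3, e4, h13, h23, h24, h14, h21, h43⟩
  cases e1 <;> cases e2 <;> cases e3 <;> cases e4 <;>
    simp_all only [parPB, parLE] <;>
    first
      | exact hP ⟨_, _, _, _, h13, h23, h24, h14, h21, h43⟩
      | exact hQ ⟨_, _, _, _, h13, h23, h24, h14, h21, h43⟩

theorem not_hasP3_of_boxes_eq_empty (h : P.boxes = ∅) : ¬ hasP3 P :=
  fun ⟨B, _, _, _, hB, _⟩ => Set.eq_empty_iff_forall_notMem.mp h B hB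

theorem not_hasP4_of_boxes_eq_empty (h : P.boxes = ∅) : ¬ hasP4 P :=
  fun ⟨B, _, _, _, hB, _⟩ => Set.eq_empty_iff_forall_notMem.mp h B hB

theorem not_hasP3_seq (hP : ¬ hasP3 P) (hQ : ¬ hasP3 Q) : ¬ hasP3 (seqPB P Q) := by
  rintro ⟨_, e1, _, _, ⟨B, hB, rfl⟩ | ⟨B, hB, rfl⟩, h1, ⟨a2, ha2, rfl⟩, ⟨a3, ha3, rfl⟩, h12, h13⟩
  · cases e1 with
    | inl a1 => exact hP ⟨B, a1, a2, a3, hB, fun h => h1 ⟨a1, h, rfl⟩, ha2, ha3, h12, h13⟩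
    | inr => exact h12
  · cases e1 with
    | inl => exact h13 trivial
    | inr a1 => exact hQ ⟨B, a1, a2, a3, hB, fun h => h1 ⟨a1, h, rfl⟩, ha2, ha3, h12, h13⟩

theorem not_hasP3_par (hP : ¬ hasP3 P) (hQ : ¬ hasP3 Q) : ¬ hasP3 (parPB P Q) := by
  rintro ⟨_, e1, _, _, ⟨B, hB, rfl⟩ | ⟨B, hB, rfl⟩, h1, ⟨a2, ha2, rfl⟩, ⟨a3, ha3, rfl⟩, h12, h13⟩
  · cases e1 with
    | inl a1 => exact hP ⟨B, a1, a2, a3, hB, fun h => h1 ⟨a1, h, rfl⟩, ha2, ha3, h12, h13⟩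
    | inr => exact h12
  · cases e1 with
    | inl => exact h12
    | inr a1 => exact hQ ⟨B, a1, a2, a3, hB, fun h => h1 ⟨a1, h, rfl⟩, ha2, ha3, h12, h13⟩

theorem not_hasP4_seq (hP : ¬ hasP4 P) (hQ : ¬ hasP4 Q) : ¬ hasP4 (seqPB P Q) := by
  rintro ⟨_, e1, _, _, ⟨B, hB, rfl⟩ | ⟨B, hB, rfl⟩, h1, ⟨a2, ha2, rfl⟩, ⟨a3, ha3, rfl⟩, h21, h31⟩
  · cases e1 with
    | inl a1 => exact hP ⟨B, a1, a2, a3, hB, fun h => h1 ⟨a1, h, rfl⟩, ha2, ha3, h21, h31⟩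
    | inr => exact h31 trivial
  · cases e1 with
    | inl => exact h21
    | inr a1 => exact hQ ⟨B, a1, a2, a3, hB, fun h => h1 ⟨a1, h, rfl⟩, ha2, ha3, h21, h31⟩

theorem not_hasP4_par (hP : ¬ hasP4 P) (hQ : ¬ hasP4 Q) : ¬ hasP4 (parPB P Q) := by
  rintro ⟨_, e1, _, _, ⟨B, hB, rfl⟩ | ⟨B, hB, rfl⟩, h1, ⟨a2, ha2, rfl⟩, ⟨a3, ha3, rfl⟩, h21, h31⟩
  · cases e1 with
    | inl a1 => exact hP ⟨B, a1, a2, a3, hB, fun h => h1 ⟨a1, h, rfl⟩, ha2, ha3, h21, h31⟩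
    | inr => exact h21
  · cases e1 with
    | inl => exact h21
    | inr a1 => exact hQ ⟨B, a1, a2, a3, hB, fun h => h1 ⟨a1, h, rfl⟩, ha2, ha3, h21, h31⟩

theorem not_hasP3_box (hP : ¬ hasP3 P) : ¬ hasP3 (boxPB P) := by
  rintro ⟨B, e1, e2, e3, hB | ⟨rfl, -⟩, h1, h2, h3, h12, h13⟩
  · exact hP ⟨B, e1, e2, e3, hB, h1, h2, h3, h12, h13⟩
  · exact h1 (Set.mem_univ e1)

theorem not_hasP4_box (hP : ¬ hasP4 P) : ¬ hasP4 (boxPB P) := by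
  rintro ⟨B, e1, e2, e3, hB | ⟨rfl, -⟩, h1, h2, h3, h21, h31⟩
  · exact hP ⟨B, e1, e2, e3, hB, h1, h2, h3, h21, h31⟩
  · exact h1 (Set.mem_univ e1)

end Patterns

section Terms

variable {A : Type}

theorem not_hasP1_semT (t : Term A) : ¬ hasP1 (semT t) := by
  induction t with
  | one => exact not_hasP1_of_subsingleton (P := onePB A)
  | atom a => exact not_hasP1_of_subsingleton (P := atomPB a)
  | seq s t ihs iht => exact not_hasP1_seq ihs iht
  | par s t ihs iht => exact not_hasP1_par ihs iht
  | box s ihs => exact ihs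

theorem laminar_boxes_semT (t : Term A) : Laminar (semT t).boxes := by
  induction t with
  | one => exact Laminar.empty
  | atom a => exact Laminar.empty
  | seq s t ihs iht => exact ihs.sum iht
  | par s t ihs iht => exact ihs.sum iht
  | box s ihs =>
    exact ihs.insert_univ.mono (Set.union_subset (Set.subset_insert _ _) fun B hB => Or.inl hB.1)

theorem not_hasP3_semT (t : Term A) : ¬ hasP3 (semT t) := by
  induction t with
  | one => exact not_hasP3_of_boxes_eq_empty (P := onePB A) rfl
  | atom a => exact not_hasP3_of_boxes_eq_empty (P := atomPB a) rfl
  | seq s t ihs iht => exact not_hasP3_seq ihs iht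
  | par s t ihs iht => exact not_hasP3_par ihs iht
  | box s ihs => exact not_hasP3_box ihs

theorem not_hasP4_semT (t : Term A) : ¬ hasP4 (semT t) := by
  induction t with
  | one => exact not_hasP4_of_boxes_eq_empty (P := onePB A) rfl
  | atom a => exact not_hasP4_of_boxes_eq_empty (P := atomPB a) rfl
  | seq s t ihs iht => exact not_hasP4_seq ihs iht
  | par s t ihs iht => exact not_hasP4_par ihs iht
  | box s ihs => exact not_hasP4_box ihs

end Terms

/-- Every series–parallel pomset with boxes avoids all four forbidden patterns. -/
theorem sp_avoids_patterns (A : Type) (t : Term A) :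
    ¬ hasP1 (semT t) ∧ ¬ hasP2 (semT t) ∧ ¬ hasP3 (semT t) ∧ ¬ hasP4 (semT t) :=
  ⟨not_hasP1_semT t, not_hasP2_iff_laminar.mpr (laminar_boxes_semT t),
    not_hasP3_semT t, not_hasP4_semT t⟩
end

section
/- Let P be a finite poset with boxes whose full event set is not a box, having at least two events, and avoiding patterns P2, P3, P4. If P contains a non-trivial prefix set of events, then P contains a non-trivial prefix set that is also nested. -/
/-
The boxes of `P` meeting a prefix set `S` without being contained in it are the obstruction to
nesting. If `B` is such a box, then `S ∪ B` and `S \ B` are again prefix sets: an event of `B`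
inherits from an event of `B ∩ S` its position below the events outside `S ∪ B` (no P4), and an
event of `S \ B` inherits from an event of `B \ S` its position below the events of `B` (no P3).
They cannot both be trivial, since otherwise `B` would be the whole event set, and by laminarity
of the boxes (no P2) each of them is straddled only by boxes that straddle `S`, other than `B`.
A prefix set with a minimal set of straddling boxes is therefore nested.
-/

namespace PB

variable {A : Type} (P : PB A)

def straddling (S : Set P.Ev) : Set (Set P.Ev) :=
  {B | B ∈ P.boxes ∧ (B ∩ S).Nonempty ∧ ¬ B ⊆ S}

variable {P}

theorem nested_of_straddling_eq_empty {S : Set P.Ev} (h : P.straddling S = ∅) : Nested P S := by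
  intro B hB
  by_contra! hBS
  exact (Set.eq_empty_iff_forall_notMem.mp h) B ⟨hB, hBS.2, hBS.1⟩

theorem boxes_laminar (h2 : ¬ hasP2 P) {B C : Set P.Ev} (hB : B ∈ P.boxes) (hC : C ∈ P.boxes)
    (hBC : (B ∩ C).Nonempty) : B ⊆ C ∨ C ⊆ B := by
  by_contra! h
  obtain ⟨x, hxB, hxC⟩ := Set.not_subset.mp h.1
  obtain ⟨y, hyC, hyB⟩ := Set.not_subset.mp h.2
  obtain ⟨z, hzB, hzC⟩ := hBC
  exact h2 ⟨B, C, x, z, y, hB, hC, ⟨hxB, hxC⟩, ⟨hzB, hzC⟩, ⟨hyC, hyB⟩⟩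

theorem isPrefix_union_box (h4 : ¬ hasP4 P) {S B : Set P.Ev} (hS : IsPrefix P S)
    (hB : B ∈ P.boxes) (hBS : (B ∩ S).Nonempty) : IsPrefix P (S ∪ B) := by
  obtain ⟨e, heB, heS⟩ := hBS
  rintro x (hxS | hxB) g hg
  · exact hS x hxS g fun hgS => hg (Or.inl hgS)
  · by_contra hxg
    exact h4 ⟨B, g, e, x, hB, fun hgB => hg (Or.inr hgB), heB, hxB,
      hS e heS g fun hgS => hg (Or.inl hgS), hxg⟩

theorem isPrefix_diff_box (h3 : ¬ hasP3 P) {S B : Set P.Ev} (hS : IsPrefix P S)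
    (hB : B ∈ P.boxes) (hBS : ¬ B ⊆ S) : IsPrefix P (S \ B) := by
  obtain ⟨f, hfB, hfS⟩ := Set.not_subset.mp hBS
  rintro x ⟨hxS, hxB⟩ g hg
  by_cases hgS : g ∈ S
  · have hgB : g ∈ B := by_contra fun hgB => hg ⟨hgS, hgB⟩
    by_contra hxg
    exact h3 ⟨B, x, f, g, hB, hxB, hfB, hgB, hS x hxS f hfS, hxg⟩
  · exact hS x hxS g hgS

theorem straddling_union_subset (h2 : ¬ hasP2 P) {S B : Set P.Ev} (hB : B ∈ P.boxes)
    (hBS : (B ∩ S).Nonempty) : P.straddling (S ∪ B) ⊆ P.straddling S \ {B} := by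
  rintro C ⟨hC, ⟨z, hzC, hz⟩, hCSB⟩
  have hCS : ¬ C ⊆ S := fun h => hCSB (h.trans Set.subset_union_left)
  have hCB : C ≠ B := by
    rintro rfl
    exact hCSB Set.subset_union_right
  refine ⟨⟨hC, ?_, hCS⟩, hCB⟩
  rcases hz with hzS | hzB
  · exact ⟨z, hzC, hzS⟩
  · rcases boxes_laminar h2 hC hB ⟨z, hzC, hzB⟩ with hCB' | hBC
    · exact absurd (hCB'.trans Set.subset_union_right) hCSB
    · exact hBS.mono (Set.inter_subset_inter_left S hBC)

theorem straddling_diff_subset (h2 : ¬ hasP2 P) {S B : Set P.Ev} (hB : B ∈ P.boxes)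
    (hBS : ¬ B ⊆ S) : P.straddling (S \ B) ⊆ P.straddling S \ {B} := by
  rintro C ⟨hC, ⟨z, hzC, hzS, hzB⟩, hCSB⟩
  have hCB : C ≠ B := by
    rintro rfl
    exact hzB hzC
  refine ⟨⟨hC, ⟨z, hzC, hzS⟩, fun hCS => ?_⟩, hCB⟩
  obtain ⟨y, hyC, hyB⟩ : (C ∩ B).Nonempty := by
    by_contra hCB'
    exact hCSB fun x hx => ⟨hCS hx, fun hxB => hCB' ⟨x, hx, hxB⟩⟩
  rcases boxes_laminar h2 hC hB ⟨y, hyC, hyB⟩ with hCB' | hBC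
  · exact hzB (hCB' hzC)
  · exact hBS (hBC.trans hCS)

theorem exists_prefix_straddling_subset (hbox : (Set.univ : Set P.Ev) ∉ P.boxes)
    (h2 : ¬ hasP2 P) (h3 : ¬ hasP3 P) (h4 : ¬ hasP4 P) {S B : Set P.Ev}
    (hSpre : IsPrefix P S) (hB : B ∈ P.straddling S) :
    ∃ T, NonTrivial P T ∧ IsPrefix P T ∧ P.straddling T ⊆ P.straddling S \ {B} := by
  obtain ⟨hBbox, hBS, hBnS⟩ := hB
  by_cases hcover : S ∪ B = Set.univ
  · refine ⟨S \ B, ⟨fun hempty => hbox ?_, fun huniv => ?_⟩,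
      isPrefix_diff_box h3 hSpre hBbox hBnS, straddling_diff_subset h2 hBbox hBnS⟩
    · rwa [← Set.union_eq_right.mpr (Set.sdiff_eq_empty.mp hempty), hcover] at hBbox
    · exact hBnS fun x _ => (huniv ▸ Set.mem_univ x : x ∈ S \ B).1
  · exact ⟨S ∪ B, ⟨(hBS.mono Set.inter_subset_right).mono Set.subset_union_left
      |>.ne_empty, hcover⟩, isPrefix_union_box h4 hSpre hBbox hBS,
      straddling_union_subset h2 hBbox hBS⟩

end PB

theorem nontrivial_prefix_nested_general (A : Type) (P : PB A)
    (hfin : Finite P.Ev)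
    (hbox : (Set.univ : Set P.Ev) ∉ P.boxes)
    (h2 : ¬ hasP2 P) (h3 : ¬ hasP3 P) (h4 : ¬ hasP4 P)
    (hA : ∃ S : Set P.Ev, NonTrivial P S ∧ IsPrefix P S) :
    ∃ S : Set P.Ev, NonTrivial P S ∧ IsPrefix P S ∧ Nested P S := by
  obtain ⟨S, ⟨hS, hSpre⟩, hmin⟩ :=
    exists_minimalFor_of_wellFoundedLT (fun S => NonTrivial P S ∧ IsPrefix P S) P.straddling hA
  refine ⟨S, hS, hSpre, PB.nested_of_straddling_eq_empty ?_⟩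
  by_contra! hne
  obtain ⟨B, hB⟩ := hne
  obtain ⟨T, hT, hTpre, hTsub⟩ := PB.exists_prefix_straddling_subset hbox h2 h3 h4 hSpre hB
  have hST := hmin ⟨hT, hTpre⟩ (hTsub.trans Set.sdiff_subset)
  exact (hTsub (hST hB)).2 rfl

/-- If a finite poset with boxes (whose full event set is not a box, with at least
two events, avoiding patterns P2, P3, P4) contains a non-trivial prefix set, it
contains a non-trivial prefix set that is nested. -/
theorem nontrivial_prefix_nested (A : Type) (P : PB A)
    (hfin : Finite P.Ev)
    (hbox : (Set.univ : Set P.Ev) ∉ P.boxes)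
    (htwo : ∃ e f : P.Ev, e ≠ f)
    (h2 : ¬ hasP2 P) (h3 : ¬ hasP3 P) (h4 : ¬ hasP4 P)
    (hA : ∃ S : Set P.Ev, NonTrivial P S ∧ IsPrefix P S) :
    ∃ S : Set P.Ev, NonTrivial P S ∧ IsPrefix P S ∧ Nested P S :=
  nontrivial_prefix_nested_general A P hfin hbox h2 h3 h4 hA
end

section
/- For any term s whose interpretation has its full event set as a box, there exists a term t such that s = [t] is provable in the bimonoid-with-boxes theory and the interpretation of t does not have its full event set as a box. -/
/-! A box covering all events of `s · t` or `s ∥ t` is the image of a box of one component,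
and then the other component has no events, so it is provably `1` and can be cancelled as a
unit. Stripping such units inductively exposes a boxed term `[t]`; if `t` is itself boxed on all
its events, `[[t']] = [t']` removes the redundant box. -/

theorem Set.image_inl_eq_univ {α β : Type*} {B : Set α} :
    Sum.inl '' B = (Set.univ : Set (α ⊕ β)) ↔ B = Set.univ ∧ IsEmpty β := by
  simp [Set.eq_univ_iff_forall, isEmpty_iff]

theorem Set.image_inr_eq_univ {α β : Type*} {B : Set β} :
    Sum.inr '' B = (Set.univ : Set (α ⊕ β)) ↔ IsEmpty α ∧ B = Set.univ := by
  simp [Set.eq_univ_iff_forall, isEmpty_iff]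

theorem univ_mem_sum_boxes {α β : Type*} {S : Set (Set α)} {T : Set (Set β)}
    (h : Set.univ ∈ Set.image Sum.inl '' S ∪ Set.image Sum.inr '' T) :
    (Set.univ ∈ S ∧ IsEmpty β) ∨ (IsEmpty α ∧ Set.univ ∈ T) := by
  rcases h with ⟨B, hB, hBuniv⟩ | ⟨B, hB, hBuniv⟩
  · obtain ⟨rfl, hβ⟩ := Set.image_inl_eq_univ.mp hBuniv
    exact .inl ⟨hB, hβ⟩
  · obtain ⟨hα, rfl⟩ := Set.image_inr_eq_univ.mp hBuniv
    exact .inr ⟨hα, hB⟩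

theorem BimEq.par_unit_r {A : Type} (s : Term A) : BimEq (.par s .one) s :=
  .trans (.par_comm _ _) (.par_unit _)

theorem bimEq_one_of_isEmpty {A : Type} (t : Term A) (h : IsEmpty (semT t).Ev) :
    BimEq t .one := by
  induction t with
  | one => exact .refl _
  | atom a => exact h.elim PUnit.unit
  | seq s t ihs iht =>
    obtain ⟨hs, ht⟩ := isEmpty_sum.mp h
    exact .trans (.seq_congr (ihs hs) (iht ht)) (.seq_unit_l _)
  | par s t ihs iht =>
    obtain ⟨hs, ht⟩ := isEmpty_sum.mp h
    exact .trans (.par_congr (ihs hs) (iht ht)) (.par_unit _)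
  | box s ihs => exact .trans (.box_congr (ihs h)) .box_one

/-- If the interpretation of `s` has its full event set as a box, then `s` is
provably a boxed term `[t]` where the interpretation of `t` does not. -/
theorem unbox_term (A : Type) (s : Term A)
    (h : (Set.univ : Set (semT s).Ev) ∈ (semT s).boxes) :
    ∃ t : Term A, BimEq s (.box t) ∧
      (Set.univ : Set (semT t).Ev) ∉ (semT t).boxes := by
  induction s with
  | one | atom _ => exact absurd h (Set.notMem_empty _)
  | seq s t ihs iht =>
    rcases univ_mem_sum_boxes h with ⟨hs, ht⟩ | ⟨hs, ht⟩
    · obtain ⟨u, hsu, hu⟩ := ihs hs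
      exact ⟨u, .trans (.seq_congr hsu (bimEq_one_of_isEmpty t ht)) (.seq_unit_r _), hu⟩
    · obtain ⟨u, htu, hu⟩ := iht ht
      exact ⟨u, .trans (.seq_congr (bimEq_one_of_isEmpty s hs) htu) (.seq_unit_l _), hu⟩
  | par s t ihs iht =>
    rcases univ_mem_sum_boxes h with ⟨hs, ht⟩ | ⟨hs, ht⟩
    · obtain ⟨u, hsu, hu⟩ := ihs hs
      exact ⟨u, .trans (.par_congr hsu (bimEq_one_of_isEmpty t ht)) (.par_unit_r _), hu⟩
    · obtain ⟨u, htu, hu⟩ := iht ht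
      exact ⟨u, .trans (.par_congr (bimEq_one_of_isEmpty s hs) htu) (.par_unit _), hu⟩
  | box s ihs =>
    by_cases hs : (Set.univ : Set (semT s).Ev) ∈ (semT s).boxes
    · obtain ⟨u, hsu, hu⟩ := ihs hs
      exact ⟨u, .trans (.box_congr hsu) (.box_box u), hu⟩
    · exact ⟨s, .refl _, hs⟩
end
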